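/- arXiv:2208.13696 — 8 statements merged into one kernel-verified Lean document; each statement's English description precedes it below -/
import Mathlib

section
/- For every integer m > 1 there is an instance on which a list schedule's free time is at least m times the optimal free time. Concretely, consider the multiset of jobs consisting of m jobs of size 1 and m−1 jobs of size m, scheduled on m machines with zero initial loads. The list schedule that processes all the size-m jobs before all the size-1 jobs has free time exactly m, while the list schedule that processes all the size-1 jobs before all the size-m jobs has free time exactly 1; hence the optimal free time of this instance is at most 1 and the first list schedule's free time is at least m times the optimal free time. -/
/-- The machine of minimum load, ties broken by lowest machine index. -/
noncomputable def bestMachine {m : ℕ} (hm : 0 < m) (ℓ : Fin m → ℝ) : Fin m :=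
  (Finset.univ.filter fun i => ∀ j, ℓ i ≤ ℓ j).min' (by
    obtain ⟨i, -, hi⟩ := Finset.exists_min_image Finset.univ ℓ ⟨⟨0, hm⟩, Finset.mem_univ _⟩
    exact ⟨i, Finset.mem_filter.mpr ⟨Finset.mem_univ _, fun j => hi j (Finset.mem_univ _)⟩⟩)

/-- One step of list scheduling: assign a job of size `s` to the best machine. -/
noncomputable def schedStep {m : ℕ} (hm : 0 < m) (ℓ : Fin m → ℝ) (s : ℝ) : Fin m → ℝ :=
  Function.update ℓ (bestMachine hm ℓ) (ℓ (bestMachine hm ℓ) + s)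

/-- Machine loads after list-scheduling `jobs` starting from initial loads `ℓ`. -/
noncomputable def loadsAfter {m : ℕ} (hm : 0 < m) (ℓ : Fin m → ℝ) : List ℝ → (Fin m → ℝ)
  | [] => ℓ
  | s :: rest => loadsAfter hm (schedStep hm ℓ s) rest

/-- The free time: minimum machine load after all jobs are assigned. -/
noncomputable def freeTime {m : ℕ} (hm : 0 < m) (ℓ : Fin m → ℝ) (jobs : List ℝ) : ℝ :=
  Finset.univ.inf' ⟨⟨0, hm⟩, Finset.mem_univ _⟩ (loadsAfter hm ℓ jobs)

/-- Total completion time of the list schedule. -/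
noncomputable def totalCompletion {m : ℕ} (hm : 0 < m) (ℓ : Fin m → ℝ) : List ℝ → ℝ
  | [] => 0
  | s :: rest => (ℓ (bestMachine hm ℓ) + s) + totalCompletion hm (schedStep hm ℓ s) rest

/-- The sequence of machines to which successive jobs are assigned. -/
noncomputable def assignSeq {m : ℕ} (hm : 0 < m) (ℓ : Fin m → ℝ) : List ℝ → List (Fin m)
  | [] => []
  | s :: rest => bestMachine hm ℓ :: assignSeq hm (schedStep hm ℓ s) rest

/-- The optimal free time of a multiset of jobs: min over orderings, zero initial loads. -/
noncomputable def optFreeTime {m : ℕ} (hm : 0 < m) (J : Multiset ℝ) : ℝ :=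
  sInf {F | ∃ l : List ℝ, (l : Multiset ℝ) = J ∧ F = freeTime hm (fun _ => 0) l}

/-- The optimal total completion time of a multiset of jobs: min over orderings. -/
noncomputable def optTotalCompletion {m : ℕ} (hm : 0 < m) (J : Multiset ℝ) : ℝ :=
  sInf {C | ∃ l : List ℝ, (l : Multiset ℝ) = J ∧ C = totalCompletion hm (fun _ => 0) l}
/-- Loads that are `a` on machines below `k` and `b` on the rest. -/
noncomputable def thresh (m k : ℕ) (a b : ℝ) : Fin m → ℝ := fun i => if i.val < k then a else b

lemma best_thresh {m : ℕ} (hm : 0 < m) {k : ℕ} (hk : k < m) {a b : ℝ} (hba : b < a) :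
    bestMachine hm (thresh m k a b) = ⟨k, hk⟩ := by
  unfold bestMachine
  apply le_antisymm
  · apply Finset.min'_le
    simp only [Finset.mem_filter, Finset.mem_univ, true_and]
    intro j
    by_cases h : (j : ℕ) < k <;> simp [thresh, h, hba.le]
  · apply Finset.le_min'
    intro y hy
    simp only [Finset.mem_filter, Finset.mem_univ, true_and] at hy
    have hyk := hy ⟨k, hk⟩
    by_cases h : (y : ℕ) < k
    · simp [thresh, h] at hyk
      exact absurd hyk (not_le.mpr hba)
    · rw [Fin.le_def]
      show k ≤ (y : ℕ)
      omega

lemma step_fill {m : ℕ} (hm : 0 < m) {k : ℕ} (hk : k < m) {a b s : ℝ} (hba : b < a)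
    (hs : b + s = a) : schedStep hm (thresh m k a b) s = thresh m (k + 1) a b := by
  unfold schedStep
  rw [best_thresh hm hk hba]
  funext i
  rcases eq_or_ne i ⟨k, hk⟩ with rfl | h
  · simp [thresh, hs]
  · rw [Function.update_of_ne h]
    have hv : (i : ℕ) ≠ k := fun hh => h (Fin.ext hh)
    by_cases hik : (i : ℕ) < k
    · simp [thresh, hik, Nat.lt_succ_of_lt hik]
    · have h2 : ¬ (i : ℕ) < k + 1 := by omega
      simp [thresh, hik, h2]

lemma step_last {m : ℕ} (hm : 0 < m) {a b : ℝ} (hba : b < a) (s : ℝ) :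
    schedStep hm (thresh m (m - 1) a b) s = thresh m (m - 1) a (b + s) := by
  have hk : m - 1 < m := by omega
  unfold schedStep
  rw [best_thresh hm hk hba]
  funext i
  rcases eq_or_ne i ⟨m - 1, hk⟩ with rfl | h
  · simp [thresh]
  · rw [Function.update_of_ne h]
    have hi := i.isLt
    have hv : (i : ℕ) ≠ m - 1 := fun hh => h (Fin.ext hh)
    have h2 : (i : ℕ) < m - 1 := by omega
    simp [thresh, h2]

lemma fill {m : ℕ} (hm : 0 < m) {a b s : ℝ} (hba : b < a) (hs : b + s = a) :
    ∀ (n k : ℕ), k + n ≤ m →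
      loadsAfter hm (thresh m k a b) (List.replicate n s) = thresh m (k + n) a b := by
  intro n
  induction n with
  | zero => intro k h; simp [loadsAfter]
  | succ n ih =>
    intro k h
    rw [List.replicate_succ]
    show loadsAfter hm (schedStep hm (thresh m k a b) s) (List.replicate n s) = _
    rw [step_fill hm (by omega) hba hs, ih (k + 1) (by omega)]
    have e : k + 1 + n = k + (n + 1) := by omega
    rw [e]

lemma lastlem {m : ℕ} (hm : 0 < m) :
    ∀ (n : ℕ) (b : ℝ), b + n ≤ m →
      loadsAfter hm (thresh m (m - 1) (m : ℝ) b) (List.replicate n 1) =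
        thresh m (m - 1) (m : ℝ) (b + n) := by
  intro n
  induction n with
  | zero => intro b h; simp [loadsAfter]
  | succ n ih =>
    intro b h
    have hn : (0 : ℝ) ≤ n := Nat.cast_nonneg n
    have hb : b < (m : ℝ) := by push_cast at h; linarith
    rw [List.replicate_succ]
    show loadsAfter hm (schedStep hm (thresh m (m - 1) (m : ℝ) b) 1) (List.replicate n 1) = _
    rw [step_last hm hb 1, ih (b + 1) (by push_cast at h ⊢; linarith)]
    have e : b + 1 + (n : ℝ) = b + ((n : ℕ) + 1 : ℕ) := by push_cast; ring
    rw [e]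

lemma loadsAfter_append {m : ℕ} (hm : 0 < m) :
    ∀ (l1 l2 : List ℝ) (ℓ : Fin m → ℝ),
      loadsAfter hm ℓ (l1 ++ l2) = loadsAfter hm (loadsAfter hm ℓ l1) l2 := by
  intro l1
  induction l1 with
  | nil => intro l2 ℓ; rfl
  | cons s rest ih =>
    intro l2 ℓ
    show loadsAfter hm (schedStep hm ℓ s) (rest ++ l2) = _
    rw [ih]
    rfl

lemma loadsAfter_nonneg {m : ℕ} (hm : 0 < m) :
    ∀ (l : List ℝ) (ℓ : Fin m → ℝ), (∀ i, 0 ≤ ℓ i) → (∀ x ∈ l, 0 ≤ x) →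
      ∀ i, 0 ≤ loadsAfter hm ℓ l i := by
  intro l
  induction l with
  | nil => intro ℓ hℓ _ i; exact hℓ i
  | cons s rest ih =>
    intro ℓ hℓ hx i
    show 0 ≤ loadsAfter hm (schedStep hm ℓ s) rest i
    apply ih
    · intro j
      unfold schedStep
      rcases eq_or_ne j (bestMachine hm ℓ) with rfl | h
      · rw [Function.update_self]
        exact add_nonneg (hℓ _) (hx s (List.mem_cons_self))
      · rw [Function.update_of_ne h]; exact hℓ j
    · exact fun x hx' => hx x (List.mem_cons_of_mem _ hx')

/-- with m jobs of size 1 and m-1 jobs of size m on m machines,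
the big-jobs-first list schedule has free time exactly m, the small-jobs-first
list schedule has free time exactly 1, hence the optimal free time is at most 1
and the first schedule's free time is at least m times the optimal free time. -/

theorem stmt0 (m : ℕ) (hm : 1 < m) :
    freeTime (Nat.zero_lt_of_lt hm) (fun _ => 0)
        (List.replicate (m - 1) (m : ℝ) ++ List.replicate m (1 : ℝ)) = (m : ℝ) ∧
    freeTime (Nat.zero_lt_of_lt hm) (fun _ => 0)
        (List.replicate m (1 : ℝ) ++ List.replicate (m - 1) (m : ℝ)) = 1 ∧
    optFreeTime (Nat.zero_lt_of_lt hm)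
        (Multiset.replicate m (1 : ℝ) + Multiset.replicate (m - 1) (m : ℝ)) ≤ 1 ∧
    (m : ℝ) * optFreeTime (Nat.zero_lt_of_lt hm)
        (Multiset.replicate m (1 : ℝ) + Multiset.replicate (m - 1) (m : ℝ)) ≤
      freeTime (Nat.zero_lt_of_lt hm) (fun _ => 0)
        (List.replicate (m - 1) (m : ℝ) ++ List.replicate m (1 : ℝ)) := by
  have hm0 : 0 < m := Nat.zero_lt_of_lt hm
  have hmR : (0 : ℝ) < m := by exact_mod_cast hm0
  have hmR1 : (1 : ℝ) ≤ m := by exact_mod_cast hm0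
  have hk1 : m - 1 < m := by omega
  have hz : (fun _ : Fin m => (0 : ℝ)) = thresh m 0 (m : ℝ) 0 := by
    funext i; simp [thresh]
  have hz1 : (fun _ : Fin m => (0 : ℝ)) = thresh m 0 (1 : ℝ) 0 := by
    funext i; simp [thresh]
  -- schedule A
  have hA : loadsAfter hm0 (fun _ => 0)
      (List.replicate (m - 1) (m : ℝ) ++ List.replicate m (1 : ℝ)) = fun _ => (m : ℝ) := by
    rw [loadsAfter_append, hz,
      fill hm0 hmR (by ring) (m - 1) 0 (by omega)]
    have e1 : (0 : ℕ) + (m - 1) = m - 1 := by omega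
    rw [e1, lastlem hm0 m 0 (by simp)]
    funext i
    simp [thresh]
  have h1 : freeTime hm0 (fun _ => 0)
      (List.replicate (m - 1) (m : ℝ) ++ List.replicate m (1 : ℝ)) = (m : ℝ) := by
    unfold freeTime
    rw [hA]
    exact Finset.inf'_const _ _
  -- schedule B
  have hB : loadsAfter hm0 (fun _ => 0)
      (List.replicate m (1 : ℝ) ++ List.replicate (m - 1) (m : ℝ)) =
      thresh m (m - 1) (1 + m) 1 := by
    rw [loadsAfter_append, hz1,
      fill hm0 (by norm_num) (by ring) m 0 (by omega)]
    have e2 : thresh m (0 + m) (1 : ℝ) 0 = thresh m 0 (1 + m) 1 := by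
      funext i
      have := i.isLt
      simp [thresh]
    rw [e2, fill hm0 (by linarith) (by ring) (m - 1) 0 (by omega), Nat.zero_add]
  have h2 : freeTime hm0 (fun _ => 0)
      (List.replicate m (1 : ℝ) ++ List.replicate (m - 1) (m : ℝ)) = 1 := by
    unfold freeTime
    rw [hB]
    apply le_antisymm
    · apply Finset.inf'_le_of_le (thresh m (m - 1) (1 + (m : ℝ)) 1)
        (Finset.mem_univ (⟨m - 1, hk1⟩ : Fin m))
      simp [thresh]
    · apply Finset.le_inf'
      intro i _
      by_cases h : (i : ℕ) < m - 1 <;> simp [thresh, h] <;> linarith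
  -- optimum
  set J := Multiset.replicate m (1 : ℝ) + Multiset.replicate (m - 1) (m : ℝ) with hJ
  set S := {F | ∃ l : List ℝ, (l : Multiset ℝ) = J ∧ F = freeTime hm0 (fun _ => 0) l} with hS
  have hbdd : BddBelow S := by
    refine ⟨0, ?_⟩
    rintro F ⟨l, hl, rfl⟩
    have hpos : ∀ x ∈ l, (0 : ℝ) ≤ x := by
      intro x hx
      have : x ∈ (l : Multiset ℝ) := by simpa using hx
      rw [hl, hJ] at this
      rcases Multiset.mem_add.mp this with h | h <;>
        rw [Multiset.eq_of_mem_replicate h] <;> linarith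
    unfold freeTime
    apply Finset.le_inf'
    intro i _
    exact loadsAfter_nonneg hm0 l _ (fun _ => le_refl 0) hpos i
  have hmem : (1 : ℝ) ∈ S := by
    exact ⟨List.replicate m (1 : ℝ) ++ List.replicate (m - 1) (m : ℝ), rfl, h2.symm⟩
  have h3 : optFreeTime hm0 J ≤ 1 := csInf_le hbdd hmem
  refine ⟨h1, h2, h3, ?_⟩
  rw [h1]
  calc (m : ℝ) * optFreeTime hm0 J ≤ (m : ℝ) * 1 :=
        mul_le_mul_of_nonneg_left h3 (le_of_lt hmR)
    _ = m := mul_one _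
end

section
/- Fix m ≥ 1 machines and a finite list of jobs with nonnegative sizes. If ℓ, ℓ' ∈ (ℝ≥0)^m are initial load vectors with ℓ_i ≤ ℓ'_i for every machine i, then the free time of the list schedule of this list started from initial loads ℓ is at most the free time of the list schedule of the same list started from initial loads ℓ'. In other words, entrywise increasing the initial loads weakly increases the free time of a list schedule. -/
/-!
A scheduling step preserves domination up to a permutation, `ℓ ≤ ℓ' ∘ σ`: the smallest load of
`ℓ` is at most that of `ℓ'`, so the job raises the former to at most the raised latter, and
retargeting `σ` by a transposition matches the two chosen machines. After all jobs the schedule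
from `ℓ'` still dominates the one from `ℓ` up to a permutation, hence has at least its minimum.
-/

open Function Equiv

theorem exists_perm_update_le_update {ι α : Type*} [DecidableEq ι] [Preorder α]
    {ℓ ℓ' : ι → α} {σ : Perm ι} (h : ℓ ≤ ℓ' ∘ σ) {i₀ j₀ : ι} (hj₀ : ∀ j, ℓ' j₀ ≤ ℓ' j)
    {a b : α} (hab : a ≤ b) : ∃ τ : Perm ι, update ℓ i₀ a ≤ update ℓ' j₀ b ∘ τ := by
  refine ⟨swap (σ i₀) j₀ * σ, fun i => ?_⟩
  simp only [comp_apply, Perm.mul_apply]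
  by_cases hi : i = i₀
  · subst hi
    simpa only [update_self, swap_apply_left] using hab
  have hσi : σ i ≠ σ i₀ := σ.injective.ne hi
  rw [update_of_ne hi]
  by_cases hj : σ i = j₀
  · rw [hj, swap_apply_right, update_of_ne (hj ▸ hσi.symm)]
    calc ℓ i ≤ ℓ' (σ i) := h i
      _ ≤ ℓ' (σ i₀) := hj ▸ hj₀ (σ i₀)
  · rw [swap_apply_of_ne_of_ne hσi hj, update_of_ne hj]
    exact h i

theorem Finset.inf'_le_inf'_of_le_comp_perm {ι α : Type*} [Fintype ι] [LinearOrder α]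
    (hne : (univ : Finset ι).Nonempty) {f g : ι → α} {σ : Perm ι} (h : f ≤ g ∘ σ) :
    univ.inf' hne f ≤ univ.inf' hne g :=
  le_inf' _ _ fun j _ =>
    calc univ.inf' hne f ≤ f (σ.symm j) := inf'_le _ (mem_univ _)
      _ ≤ g j := by simpa using h (σ.symm j)

section ListScheduling

variable {m : ℕ} (hm : 0 < m)

theorem bestMachine_le (ℓ : Fin m → ℝ) (j : Fin m) : ℓ (bestMachine hm ℓ) ≤ ℓ j :=
  (Finset.mem_filter.mp (Finset.min'_mem (Finset.univ.filter fun i => ∀ j, ℓ i ≤ ℓ j) _)).2 j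

theorem exists_perm_schedStep_le {ℓ ℓ' : Fin m → ℝ} {σ : Perm (Fin m)} (h : ℓ ≤ ℓ' ∘ σ)
    (s : ℝ) : ∃ τ : Perm (Fin m), schedStep hm ℓ s ≤ schedStep hm ℓ' s ∘ τ := by
  have hmin : ℓ (bestMachine hm ℓ) ≤ ℓ' (bestMachine hm ℓ') :=
    calc ℓ (bestMachine hm ℓ) ≤ ℓ (σ.symm (bestMachine hm ℓ')) := bestMachine_le hm ℓ _
      _ ≤ ℓ' (bestMachine hm ℓ') := by simpa using h (σ.symm (bestMachine hm ℓ'))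
  exact exists_perm_update_le_update h (bestMachine_le hm ℓ') (by gcongr)

theorem exists_perm_loadsAfter_le (jobs : List ℝ) {ℓ ℓ' : Fin m → ℝ} {σ : Perm (Fin m)}
    (h : ℓ ≤ ℓ' ∘ σ) : ∃ τ : Perm (Fin m), loadsAfter hm ℓ jobs ≤ loadsAfter hm ℓ' jobs ∘ τ := by
  induction jobs generalizing ℓ ℓ' σ with
  | nil => exact ⟨σ, h⟩
  | cons s rest ih =>
    obtain ⟨τ, hτ⟩ := exists_perm_schedStep_le hm h s
    exact ih hτ

end ListScheduling

theorem stmt2_general (m : ℕ) (hm : 0 < m) (jobs : List ℝ)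
    (ℓ ℓ' : Fin m → ℝ) (hle : ∀ i, ℓ i ≤ ℓ' i) :
    freeTime hm ℓ jobs ≤ freeTime hm ℓ' jobs := by
  obtain ⟨σ, hσ⟩ := exists_perm_loadsAfter_le hm jobs (σ := Equiv.refl _) hle
  exact Finset.inf'_le_inf'_of_le_comp_perm _ hσ

/-- entrywise increasing the initial loads weakly increases the
free time of a list schedule. -/
theorem stmt2 (m : ℕ) (hm : 0 < m) (jobs : List ℝ) (hjobs : ∀ s ∈ jobs, 0 ≤ s)
    (ℓ ℓ' : Fin m → ℝ) (hℓ : ∀ i, 0 ≤ ℓ i) (hle : ∀ i, ℓ i ≤ ℓ' i) :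
    freeTime hm ℓ jobs ≤ freeTime hm ℓ' jobs :=
  stmt2_general m hm jobs ℓ ℓ' hle
end

section
/- Fix a finite list of jobs with nonnegative sizes. (a) For m ≥ 1 machines, if ℓ, ℓ' ∈ (ℝ≥0)^m are initial load vectors with ℓ_i ≤ ℓ'_i for every machine i, then the total completion time of the list schedule of this list started from initial loads ℓ is at most the total completion time of the list schedule of the same list started from initial loads ℓ'. (b) For any integers 1 ≤ m' ≤ m, the total completion time of the list schedule of this list on m machines with zero initial loads is at most the total completion time on m' machines with zero initial loads. In other words, increasing the initial loads or decreasing the number of machines weakly increases the total completion time of a list schedule. -/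
section Aux

lemma bestMachine_mem_filter {m : ℕ} (hm : 0 < m) (ℓ : Fin m → ℝ) :
    bestMachine hm ℓ ∈ Finset.univ.filter fun i => ∀ j, ℓ i ≤ ℓ j :=
  Finset.min'_mem _ _

lemma bestMachine_min {m : ℕ} (hm : 0 < m) (ℓ : Fin m → ℝ) (j : Fin m) :
    ℓ (bestMachine hm ℓ) ≤ ℓ j :=
  (Finset.mem_filter.mp (bestMachine_mem_filter hm ℓ)).2 j

lemma relErase {M M' : Multiset ℝ} (hrel : Multiset.Rel (· ≤ ·) M M')
    {a b : ℝ} (haM : a ∈ M) (hamin : ∀ x ∈ M, a ≤ x)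
    (hbM : b ∈ M') (hbmin : ∀ y ∈ M', b ≤ y) :
    a ≤ b ∧ Multiset.Rel (· ≤ ·) (M.erase a) (M'.erase b) := by
  rw [← Multiset.cons_erase hbM] at hrel
  obtain ⟨a', s', ha'b, hrel', hM⟩ := Multiset.rel_cons_right.mp hrel
  have haa' : a ≤ a' := hamin a' (hM ▸ Multiset.mem_cons_self _ _)
  refine ⟨le_trans haa' ha'b, ?_⟩
  by_cases hcase : a = a'
  · subst hcase
    rw [hM, Multiset.erase_cons_head]
    exact hrel'
  · have has' : a ∈ s' := by
      rcases Multiset.mem_cons.mp (hM ▸ haM) with h | h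
      · exact absurd h hcase
      · exact h
    rw [← Multiset.cons_erase has'] at hrel'
    obtain ⟨c, t', hac, hrel'', ht⟩ := Multiset.rel_cons_left.mp hrel'
    have hbc : b ≤ c := hbmin c (Multiset.mem_of_mem_erase (ht ▸ Multiset.mem_cons_self _ _))
    rw [hM, Multiset.erase_cons_tail _ (Ne.symm hcase), ht]
    exact Multiset.Rel.cons (le_trans ha'b hbc) hrel''

lemma univ_val_decomp {m : ℕ} (b : Fin m) :
    (Finset.univ : Finset (Fin m)).val = b ::ₘ (Finset.univ : Finset (Fin m)).val.erase b :=
  (Multiset.cons_erase (by simp)).symm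

lemma map_loads {m : ℕ} (ℓ : Fin m → ℝ) (b : Fin m) :
    Multiset.map ℓ Finset.univ.val = ℓ b ::ₘ Multiset.map ℓ (Finset.univ.val.erase b) := by
  conv_lhs => rw [univ_val_decomp b]
  rw [Multiset.map_cons]

lemma erase_map_loads {m : ℕ} (ℓ : Fin m → ℝ) (b : Fin m) :
    (Multiset.map ℓ Finset.univ.val).erase (ℓ b)
      = Multiset.map ℓ (Finset.univ.val.erase b) := by
  rw [map_loads ℓ b, Multiset.erase_cons_head]

lemma map_step {m : ℕ} (hm : 0 < m) (ℓ : Fin m → ℝ) (s : ℝ) :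
    Multiset.map (schedStep hm ℓ s) Finset.univ.val
      = (ℓ (bestMachine hm ℓ) + s) ::ₘ
        Multiset.map ℓ (Finset.univ.val.erase (bestMachine hm ℓ)) := by
  set b := bestMachine hm ℓ with hb
  conv_lhs => rw [univ_val_decomp b]
  rw [Multiset.map_cons]
  congr 1
  · simp [schedStep, ← hb]
  · apply Multiset.map_congr rfl
    intro x hx
    have hxb : x ≠ b := by
      rw [← Finset.erase_val] at hx
      exact (Finset.mem_erase.mp (Finset.mem_val.mp hx)).1
    simp [schedStep, ← hb, Function.update_of_ne hxb]

lemma totalCompletion_mono_rel : ∀ (jobs : List ℝ) (m : ℕ) (hm : 0 < m) (ℓ ℓ' : Fin m → ℝ),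
    Multiset.Rel (· ≤ ·) (Multiset.map ℓ Finset.univ.val) (Multiset.map ℓ' Finset.univ.val) →
    totalCompletion hm ℓ jobs ≤ totalCompletion hm ℓ' jobs
  | [], m, hm, ℓ, ℓ', _ => by simp [totalCompletion]
  | s :: rest, m, hm, ℓ, ℓ', hrel => by
    set b := bestMachine hm ℓ with hbdef
    set b' := bestMachine hm ℓ' with hb'def
    have haM : ℓ b ∈ Multiset.map ℓ Finset.univ.val := Multiset.mem_map_of_mem _ (by simp)
    have hamin : ∀ x ∈ Multiset.map ℓ Finset.univ.val, ℓ b ≤ x := by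
      intro x hx
      obtain ⟨j, -, rfl⟩ := Multiset.mem_map.mp hx
      exact bestMachine_min hm ℓ j
    have hbM : ℓ' b' ∈ Multiset.map ℓ' Finset.univ.val := Multiset.mem_map_of_mem _ (by simp)
    have hbmin : ∀ y ∈ Multiset.map ℓ' Finset.univ.val, ℓ' b' ≤ y := by
      intro y hy
      obtain ⟨j, -, rfl⟩ := Multiset.mem_map.mp hy
      exact bestMachine_min hm ℓ' j
    obtain ⟨hab, hrel2⟩ := relErase hrel haM hamin hbM hbmin
    rw [erase_map_loads, erase_map_loads] at hrel2
    simp only [totalCompletion, ← hbdef, ← hb'def]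
    refine add_le_add (add_le_add_left hab s) ?_
    apply totalCompletion_mono_rel rest m hm
    rw [map_step, map_step, ← hbdef, ← hb'def]
    exact Multiset.Rel.cons (add_le_add_left hab s) hrel2

/-- Pad a load vector on `m'` machines to `m` machines with load `T` on the extras. -/
def pad {m m' : ℕ} (hle : m' ≤ m) (ℓ' : Fin m' → ℝ) (T : ℝ) : Fin m → ℝ :=
  fun i => if h : (i : ℕ) < m' then ℓ' ⟨i, h⟩ else T

lemma pad_lt {m m' : ℕ} (hle : m' ≤ m) (ℓ' : Fin m' → ℝ) (T : ℝ) {i : Fin m}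
    (h : (i : ℕ) < m') : pad hle ℓ' T i = ℓ' ⟨i, h⟩ := dif_pos h

lemma pad_ge {m m' : ℕ} (hle : m' ≤ m) (ℓ' : Fin m' → ℝ) (T : ℝ) {i : Fin m}
    (h : ¬ (i : ℕ) < m') : pad hle ℓ' T i = T := dif_neg h

lemma pad_castLE {m m' : ℕ} (hle : m' ≤ m) (ℓ' : Fin m' → ℝ) (T : ℝ) (j : Fin m') :
    pad hle ℓ' T (Fin.castLE hle j) = ℓ' j := by
  rw [pad_lt hle ℓ' T j.isLt]
  exact congrArg ℓ' (Fin.ext rfl)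

lemma best_pad {m m' : ℕ} (hm' : 0 < m') (hle : m' ≤ m) (ℓ' : Fin m' → ℝ) (T : ℝ)
    (hT : ∀ i, ℓ' i < T) :
    bestMachine (lt_of_lt_of_le hm' hle) (pad hle ℓ' T)
      = Fin.castLE hle (bestMachine hm' ℓ') := by
  set b' := bestMachine hm' ℓ' with hb'
  have hb'min : ∀ j, ℓ' b' ≤ ℓ' j := bestMachine_min hm' ℓ'
  have hLb' : pad hle ℓ' T (Fin.castLE hle b') = ℓ' b' := pad_castLE hle ℓ' T b'
  have hmem : Fin.castLE hle b'
      ∈ Finset.univ.filter (fun i => ∀ j, pad hle ℓ' T i ≤ pad hle ℓ' T j) := by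
    refine Finset.mem_filter.mpr ⟨Finset.mem_univ _, fun j => ?_⟩
    rw [hLb']
    by_cases hj : (j : ℕ) < m'
    · rw [pad_lt hle ℓ' T hj]; exact hb'min _
    · rw [pad_ge hle ℓ' T hj]; exact (hT b').le
  refine le_antisymm (Finset.min'_le _ _ hmem) (Finset.le_min' _ _ _ ?_)
  intro i hi
  obtain ⟨-, hmin⟩ := Finset.mem_filter.mp hi
  have hiT : pad hle ℓ' T i < T := lt_of_le_of_lt (le_of_le_of_eq (hmin _) hLb') (hT b')
  have him' : (i : ℕ) < m' := by
    by_contra h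
    rw [pad_ge hle ℓ' T h] at hiT
    exact absurd hiT (lt_irrefl T)
  have hfilt : (⟨i, him'⟩ : Fin m') ∈ Finset.univ.filter (fun i0 => ∀ j, ℓ' i0 ≤ ℓ' j) := by
    refine Finset.mem_filter.mpr ⟨Finset.mem_univ _, fun j => ?_⟩
    calc ℓ' ⟨i, him'⟩ = pad hle ℓ' T i := (pad_lt hle ℓ' T him').symm
      _ ≤ pad hle ℓ' T (Fin.castLE hle j) := hmin _
      _ = ℓ' j := pad_castLE hle ℓ' T j
  have hb'le : b' ≤ (⟨i, him'⟩ : Fin m') := Finset.min'_le _ _ hfilt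
  simpa [Fin.le_def] using hb'le

lemma step_pad {m m' : ℕ} (hm' : 0 < m') (hle : m' ≤ m) (ℓ' : Fin m' → ℝ) (T : ℝ)
    (hT : ∀ i, ℓ' i < T) (s : ℝ) :
    schedStep (lt_of_lt_of_le hm' hle) (pad hle ℓ' T) s
      = pad hle (schedStep hm' ℓ' s) T := by
  funext i
  set b' := bestMachine hm' ℓ' with hb'
  rw [schedStep, best_pad hm' hle ℓ' T hT, ← hb']
  by_cases hi : i = Fin.castLE hle b'
  · subst hi
    rw [Function.update_self, pad_castLE, pad_castLE]
    simp [schedStep, ← hb']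
  · rw [Function.update_of_ne hi]
    by_cases him' : (i : ℕ) < m'
    · have hne : (⟨i, him'⟩ : Fin m') ≠ b' := by
        intro h
        apply hi
        apply Fin.ext
        simpa using congrArg Fin.val h
      rw [pad_lt hle ℓ' T him', pad_lt hle _ T him']
      simp [schedStep, ← hb', Function.update_of_ne hne]
    · rw [pad_ge hle ℓ' T him', pad_ge hle _ T him']

lemma sim : ∀ (jobs : List ℝ), (∀ s ∈ jobs, 0 ≤ s) →
    ∀ (m m' : ℕ) (hm' : 0 < m') (hle : m' ≤ m) (ℓ' : Fin m' → ℝ) (T : ℝ),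
    (∀ i, ℓ' i + jobs.sum < T) →
    totalCompletion (lt_of_lt_of_le hm' hle) (pad hle ℓ' T) jobs
      = totalCompletion hm' ℓ' jobs
  | [], _, m, m', hm', hle, ℓ', T, _ => by simp [totalCompletion]
  | s :: rest, hnn, m, m', hm', hle, ℓ', T, hbound => by
    have hs : 0 ≤ s := hnn s (by simp)
    have hrest : ∀ x ∈ rest, 0 ≤ x := fun x hx => hnn x (by simp [hx])
    have hsum : (0:ℝ) ≤ (s :: rest).sum := List.sum_nonneg hnn
    have hT : ∀ i, ℓ' i < T := fun i =>
      lt_of_le_of_lt (le_add_of_nonneg_right hsum) (hbound i)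
    simp only [totalCompletion]
    rw [best_pad hm' hle ℓ' T hT, pad_castLE, step_pad hm' hle ℓ' T hT s]
    congr 1
    apply sim rest hrest m m' hm' hle
    intro i
    have hupd : schedStep hm' ℓ' s i ≤ ℓ' i + s := by
      by_cases hib : i = bestMachine hm' ℓ'
      · subst hib; simp [schedStep]
      · have : schedStep hm' ℓ' s i = ℓ' i := by
          simp [schedStep, Function.update_of_ne hib]
        rw [this]; linarith
    have hb := hbound i
    simp only [List.sum_cons] at hb
    linarith

end Aux

/-- increasing the initial loads, or decreasing the number of
machines, weakly increases the total completion time of a list schedule. -/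
theorem stmt4 (jobs : List ℝ) (hjobs : ∀ s ∈ jobs, 0 ≤ s) :
    (∀ (m : ℕ) (hm : 0 < m) (ℓ ℓ' : Fin m → ℝ),
      (∀ i, 0 ≤ ℓ i) → (∀ i, ℓ i ≤ ℓ' i) →
      totalCompletion hm ℓ jobs ≤ totalCompletion hm ℓ' jobs) ∧
    (∀ (m m' : ℕ) (hm' : 0 < m') (hle : m' ≤ m),
      totalCompletion (m := m) (Nat.lt_of_lt_of_le hm' hle) (fun _ => 0) jobs ≤
        totalCompletion (m := m') hm' (fun _ => 0) jobs) := by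
  constructor
  · intro m hm ℓ ℓ' _ hle
    apply totalCompletion_mono_rel jobs m hm
    exact Multiset.rel_map.mpr (Multiset.rel_refl_of_refl_on (fun i _ => hle i))
  · intro m m' hm' hle
    have hm : 0 < m := Nat.lt_of_lt_of_le hm' hle
    set T : ℝ := jobs.sum + 1 with hTdef
    have hsum : (0:ℝ) ≤ jobs.sum := List.sum_nonneg hjobs
    have h1 : totalCompletion hm (fun _ => 0) jobs
        ≤ totalCompletion hm (pad hle (fun _ => (0:ℝ)) T) jobs := by
      apply totalCompletion_mono_rel jobs m hm
      apply Multiset.rel_map.mpr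
      apply Multiset.rel_refl_of_refl_on
      intro i _
      show (0:ℝ) ≤ pad hle (fun _ => (0:ℝ)) T i
      by_cases h : (i : ℕ) < m'
      · rw [pad_lt hle _ T h]
      · rw [pad_ge hle _ T h]
        linarith
    have h2 : totalCompletion hm (pad hle (fun _ => (0:ℝ)) T) jobs
        = totalCompletion hm' (fun _ => 0) jobs := by
      apply sim jobs hjobs m m' hm' hle
      intro i
      simp only [zero_add, hTdef]
      linarith
    exact le_of_le_of_eq h1 h2
end

section
/- Let k ≥ 1 be an integer and let b_1, …, b_k ≥ 0 be real numbers satisfying b_i ≥ b_{i-1}/2 for all 2 ≤ i ≤ k. Let m' be a real number with m' ≥ b_1 + … + b_k. Then for every integer 1 ≤ k' ≤ k, one has m' − (b_1 + … + b_{k-1}) ≥ 2^{-(k-k'+1)} · ( m' − (b_1 + … + b_{k'-1}) ), where an empty sum is 0. -/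
/-- if b₁, …, b_k ≥ 0 satisfy bᵢ ≥ b_{i-1}/2 for 2 ≤ i ≤ k, and
m' ≥ b₁ + … + b_k, then for every 1 ≤ k' ≤ k,
m' − (b₁ + … + b_{k-1}) ≥ 2^{-(k-k'+1)}·(m' − (b₁ + … + b_{k'-1})). -/
theorem stmt7 (k : ℕ) (hk : 1 ≤ k) (b : ℕ → ℝ)
    (hb0 : ∀ i, 1 ≤ i → i ≤ k → 0 ≤ b i)
    (hhalf : ∀ i, 2 ≤ i → i ≤ k → b (i - 1) / 2 ≤ b i)
    (m' : ℝ) (hm' : ∑ i ∈ Finset.Icc 1 k, b i ≤ m')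
    (k' : ℕ) (hk' : 1 ≤ k') (hk'k : k' ≤ k) :
    (2 : ℝ)⁻¹ ^ (k - k' + 1) * (m' - ∑ i ∈ Finset.Icc 1 (k' - 1), b i) ≤
      m' - ∑ i ∈ Finset.Icc 1 (k - 1), b i := by
  set f : ℝ := m' - ∑ i ∈ Finset.Icc 1 (k - 1), b i with hf
  -- split off the top term of the sum up to k
  have hsplit : ∑ i ∈ Finset.Icc 1 k, b i
      = (∑ i ∈ Finset.Icc 1 (k - 1), b i) + b k := by
    conv_lhs => rw [show k = (k - 1) + 1 by omega]
    rw [Finset.sum_Icc_succ_top (by omega), Nat.sub_add_cancel hk]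
  have hbk_le_f : b k ≤ f := by
    have := hm'
    rw [hsplit] at this
    simp only [hf]
    linarith
  have hbk0 : 0 ≤ b k := hb0 k hk le_rfl
  have hf0 : 0 ≤ f := le_trans hbk0 hbk_le_f
  -- chain lemma: b i ≤ 2^t * b (i+t)
  have chain : ∀ t i, 1 ≤ i → i + t ≤ k → b i ≤ 2 ^ t * b (i + t) := by
    intro t
    induction t with
    | zero => intro i _ _; simp
    | succ t ih =>
      intro i hi1 hik
      have h1 : b i ≤ 2 ^ t * b (i + t) := ih i hi1 (by omega)
      have h2 : b (i + t) / 2 ≤ b (i + t + 1) := by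
        have := hhalf (i + t + 1) (by omega) (by omega)
        simpa using this
      have h3 : b (i + t) ≤ 2 * b (i + t + 1) := by linarith
      have h4 : (0:ℝ) ≤ 2 ^ t := by positivity
      calc b i ≤ 2 ^ t * b (i + t) := h1
        _ ≤ 2 ^ t * (2 * b (i + t + 1)) := by nlinarith
        _ = 2 ^ (t + 1) * b (i + (t + 1)) := by ring_nf
  have hbi : ∀ i, 1 ≤ i → i ≤ k → b i ≤ 2 ^ (k - i) * b k := by
    intro i hi1 hik
    have := chain (k - i) i hi1 (by omega)
    have h : i + (k - i) = k := by omega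
    rwa [h] at this
  -- main induction
  have main : ∀ d, d ≤ k - 1 →
      m' - ∑ i ∈ Finset.Icc 1 (k - d - 1), b i ≤ (2 ^ (d + 1) - 1) * f := by
    intro d
    induction d with
    | zero =>
      intro _
      simp only [Nat.sub_zero]
      rw [← hf]
      norm_num
    | succ d ih =>
      intro hd
      have ihd := ih (by omega)
      have hsplit2 : ∑ i ∈ Finset.Icc 1 (k - d - 1), b i
          = (∑ i ∈ Finset.Icc 1 (k - d - 1 - 1), b i) + b (k - d - 1) := by
        conv_lhs => rw [show k - d - 1 = (k - d - 1 - 1) + 1 by omega]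
        rw [Finset.sum_Icc_succ_top (by omega), show (k - d - 1 - 1) + 1 = k - d - 1 by omega]
      have hb' : b (k - d - 1) ≤ 2 ^ (d + 1) * b k := by
        have := hbi (k - d - 1) (by omega) (by omega)
        have h : k - (k - d - 1) = d + 1 := by omega
        rwa [h] at this
      have hbk2 : 2 ^ (d + 1) * b k ≤ 2 ^ (d + 1) * f := by
        have h4 : (0:ℝ) ≤ 2 ^ (d + 1) := by positivity
        nlinarith
      have heq : k - (d + 1) - 1 = k - d - 1 - 1 := by omega
      rw [heq]
      have : m' - ∑ i ∈ Finset.Icc 1 (k - d - 1 - 1), b i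
          = (m' - ∑ i ∈ Finset.Icc 1 (k - d - 1), b i) + b (k - d - 1) := by
        rw [hsplit2]; ring
      rw [this]
      have hpow : (2:ℝ) ^ (d + 1 + 1) = 2 * 2 ^ (d + 1) := by ring
      calc (m' - ∑ i ∈ Finset.Icc 1 (k - d - 1), b i) + b (k - d - 1)
          ≤ (2 ^ (d + 1) - 1) * f + 2 ^ (d + 1) * f := by linarith
        _ = (2 ^ (d + 1 + 1) - 1) * f := by rw [hpow]; ring
  -- conclude
  have hd : k - k' ≤ k - 1 := by omega
  have hmain := main (k - k') hd
  have heq : k - (k - k') - 1 = k' - 1 := by omega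
  rw [heq] at hmain
  have hn : (m' - ∑ i ∈ Finset.Icc 1 (k' - 1), b i) ≤ 2 ^ (k - k' + 1) * f := by
    nlinarith [hf0]
  have hinv : ((2:ℝ)⁻¹) ^ (k - k' + 1) * (2 ^ (k - k' + 1) * f) = f := by
    rw [← mul_assoc, ← mul_pow]
    norm_num
  calc (2 : ℝ)⁻¹ ^ (k - k' + 1) * (m' - ∑ i ∈ Finset.Icc 1 (k' - 1), b i)
      ≤ (2 : ℝ)⁻¹ ^ (k - k' + 1) * (2 ^ (k - k' + 1) * f) := by
        apply mul_le_mul_of_nonneg_left hn (by positivity)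
    _ = f := hinv
end

section
/- Let m, x, x', μ, μ', Δ, θ be real numbers with Δ ≥ 1, 0 < θ ≤ 1, |x − μ| ≤ Δ, |x' − μ'| ≤ Δ, μ ≤ m + Δ, m − x ≥ 1, and m + Δ − μ ≥ θ (m + Δ − μ'). Then 3Δ (m − x) ≥ θ (m − x'). -/
lemma add_two_mul_le_three_mul {R : Type*} [CommRing R] [LinearOrder R] [IsStrictOrderedRing R]
    {a d : R} (ha : 1 ≤ a) (hd : 1 ≤ d) : a + 2 * d ≤ 3 * d * a := by
  nlinarith [mul_le_mul_of_nonneg_left ha (by linarith : (0 : R) ≤ 2 * d)]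

theorem stmt8_general (m x x' μ μ' Δ θ : ℝ) (hΔ : 1 ≤ Δ) (hθ0 : 0 < θ)
    (hx : |x - μ| ≤ Δ) (hx' : |x' - μ'| ≤ Δ) (hmx : 1 ≤ m - x)
    (h : θ * (m + Δ - μ') ≤ m + Δ - μ) :
    θ * (m - x') ≤ 3 * Δ * (m - x) := by
  calc θ * (m - x') ≤ θ * (m + Δ - μ') :=
        mul_le_mul_of_nonneg_left (by linarith [(abs_le.mp hx').1]) hθ0.le
    _ ≤ m + Δ - μ := h
    _ ≤ (m - x) + 2 * Δ := by linarith [(abs_le.mp hx).2]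
    _ ≤ 3 * Δ * (m - x) := add_two_mul_le_three_mul hmx hΔ

/-- if Δ ≥ 1, 0 < θ ≤ 1, |x − μ| ≤ Δ, |x' − μ'| ≤ Δ, μ ≤ m + Δ,
m − x ≥ 1, and m + Δ − μ ≥ θ(m + Δ − μ'), then 3Δ(m − x) ≥ θ(m − x'). -/
theorem stmt8 (m x x' μ μ' Δ θ : ℝ) (hΔ : 1 ≤ Δ) (hθ0 : 0 < θ) (hθ1 : θ ≤ 1)
    (hx : |x - μ| ≤ Δ) (hx' : |x' - μ'| ≤ Δ) (hμ : μ ≤ m + Δ) (hmx : 1 ≤ m - x)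
    (h : θ * (m + Δ - μ') ≤ m + Δ - μ) :
    θ * (m - x') ≤ 3 * Δ * (m - x) :=
  stmt8_general m x x' μ μ' Δ θ hΔ hθ0 hx hx' hmx h
end

section
/- Let m ≥ 1 machines have initial loads ℓ ∈ (ℝ≥0)^m with ℓ_i ≤ S for every machine i, let τ ≥ 0, and consider a finite list of jobs with nonnegative sizes, listed in nondecreasing order of size, in which strictly fewer than m jobs have size greater than τ. Let V be the total size of the jobs of size at most τ. Then the free time of the list schedule of this list started from initial loads ℓ is at most S + V/m + τ. -/
section Aux
variable {m : ℕ}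

lemma myBestMachine_le (hm : 0 < m) (ℓ : Fin m → ℝ) (j : Fin m) :
    ℓ (bestMachine hm ℓ) ≤ ℓ j := by
  have h := Finset.min'_mem (Finset.univ.filter fun i => ∀ j, ℓ i ≤ ℓ j)
    (by
      obtain ⟨i, -, hi⟩ := Finset.exists_min_image Finset.univ ℓ ⟨⟨0, hm⟩, Finset.mem_univ _⟩
      exact ⟨i, Finset.mem_filter.mpr ⟨Finset.mem_univ _, fun j => hi j (Finset.mem_univ _)⟩⟩)
  rw [Finset.mem_filter] at h
  exact h.2 j

lemma myLoads_mono (hm : 0 < m) :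
    ∀ (jobs : List ℝ) (ℓ : Fin m → ℝ), (∀ s ∈ jobs, 0 ≤ s) →
    ∀ i, ℓ i ≤ loadsAfter hm ℓ jobs i := by
  intro jobs
  induction jobs with
  | nil => intro ℓ _ i; simp [loadsAfter]
  | cons s rest ih =>
    intro ℓ h i
    have h1 : ℓ i ≤ schedStep hm ℓ s i := by
      unfold schedStep
      by_cases hi : i = bestMachine hm ℓ
      · subst hi; simp; linarith [h s List.mem_cons_self]
      · simp [Function.update_of_ne hi]
    calc ℓ i ≤ schedStep hm ℓ s i := h1
      _ ≤ _ := ih (schedStep hm ℓ s) (fun x hx => h x (List.mem_cons_of_mem _ hx)) i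

lemma mySum_loadsAfter (hm : 0 < m) :
    ∀ (jobs : List ℝ) (ℓ : Fin m → ℝ),
    ∑ i, loadsAfter hm ℓ jobs i = ∑ i, ℓ i + jobs.sum := by
  intro jobs
  induction jobs with
  | nil => intro ℓ; simp [loadsAfter]
  | cons s rest ih =>
    intro ℓ
    show ∑ i, loadsAfter hm (schedStep hm ℓ s) rest i = _
    rw [ih]
    have : ∑ i, schedStep hm ℓ s i = ∑ i, ℓ i + s := by
      unfold schedStep
      rw [Finset.sum_update_of_mem (Finset.mem_univ _)]
      have h2 := Finset.add_sum_erase Finset.univ ℓ (Finset.mem_univ (bestMachine hm ℓ))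
      rw [← Finset.sdiff_singleton_eq_erase] at h2
      linarith
    rw [this, List.sum_cons]; ring

lemma myLoads_le (hm : 0 < m) (τ : ℝ) (hτ : 0 ≤ τ) :
    ∀ (jobs : List ℝ) (B : ℝ) (ℓ : Fin m → ℝ), (∀ s ∈ jobs, 0 ≤ s) → (∀ s ∈ jobs, s ≤ τ) →
    (∀ j, ℓ j ≤ B) →
    ∀ i, loadsAfter hm ℓ jobs i ≤
      max B ((Finset.univ.inf' ⟨⟨0, hm⟩, Finset.mem_univ _⟩ (loadsAfter hm ℓ jobs)) + τ) := by
  intro jobs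
  induction jobs with
  | nil =>
    intro B ℓ _ _ hB i
    exact le_max_of_le_left (hB i)
  | cons s rest ih =>
    intro B ℓ h0 hτ' hB i
    have hs0 : 0 ≤ s := h0 s List.mem_cons_self
    have hsτ : s ≤ τ := hτ' s List.mem_cons_self
    set b := bestMachine hm ℓ with hb
    set ℓ' := schedStep hm ℓ s with hℓ'
    have hshow : loadsAfter hm ℓ (s :: rest) = loadsAfter hm ℓ' rest := rfl
    set F := Finset.univ.inf' ⟨⟨0, hm⟩, Finset.mem_univ (⟨0, hm⟩ : Fin m)⟩ (loadsAfter hm ℓ' rest) with hF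
    -- ℓ b ≤ F
    have hbF : ℓ b ≤ F := by
      obtain ⟨j, -, hj⟩ := Finset.exists_mem_eq_inf' (⟨⟨0, hm⟩, Finset.mem_univ (⟨0, hm⟩ : Fin m)⟩ :
        (Finset.univ : Finset (Fin m)).Nonempty) (loadsAfter hm ℓ' rest)
      rw [hF, hj]
      have h1 : ℓ b ≤ ℓ' j := by
        unfold ℓ'; unfold schedStep
        by_cases hjb : j = b
        · subst hjb; rw [← hb]; simp; linarith
        · rw [← hb, Function.update_of_ne hjb]; exact myBestMachine_le hm ℓ j
      exact h1.trans (myLoads_mono hm rest ℓ' (fun x hx => h0 x (List.mem_cons_of_mem _ hx)) j)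
    have hB' : ∀ j, ℓ' j ≤ max B (F + τ) := by
      intro j
      unfold ℓ'; unfold schedStep
      by_cases hjb : j = b
      · subst hjb; rw [← hb]; simp only [Function.update_self]
        exact le_max_of_le_right (by linarith)
      · rw [← hb, Function.update_of_ne hjb]; exact le_max_of_le_left (hB j)
    have := ih (max B (F + τ)) ℓ' (fun x hx => h0 x (List.mem_cons_of_mem _ hx))
      (fun x hx => hτ' x (List.mem_cons_of_mem _ hx)) hB' i
    rw [hshow]
    calc loadsAfter hm ℓ' rest i ≤ max (max B (F + τ)) (F + τ) := this
      _ = max B (F + τ) := by rw [max_assoc, max_self]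

lemma myUntouched (hm : 0 < m) :
    ∀ (jobs : List ℝ) (ℓ : Fin m → ℝ),
    ∃ T : Finset (Fin m), T.card ≤ jobs.length ∧
      ∀ i ∉ T, loadsAfter hm ℓ jobs i = ℓ i := by
  intro jobs
  induction jobs with
  | nil => intro ℓ; exact ⟨∅, by simp, fun i _ => rfl⟩
  | cons s rest ih =>
    intro ℓ
    obtain ⟨T, hT, hT2⟩ := ih (schedStep hm ℓ s)
    refine ⟨insert (bestMachine hm ℓ) T, ?_, ?_⟩
    · calc (insert (bestMachine hm ℓ) T).card ≤ T.card + 1 := Finset.card_insert_le _ _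
        _ ≤ rest.length + 1 := by omega
        _ = (s :: rest).length := rfl
    · intro i hi
      rw [Finset.mem_insert, not_or] at hi
      show loadsAfter hm (schedStep hm ℓ s) rest i = ℓ i
      rw [hT2 i hi.2]
      unfold schedStep
      rw [Function.update_of_ne hi.1]

lemma mySortedSplit (τ : ℝ) :
    ∀ (l : List ℝ), l.Pairwise (· ≤ ·) →
    l = l.filter (fun s => s ≤ τ) ++ l.filter (fun s => τ < s) := by
  intro l
  induction l with
  | nil => intro _; rfl
  | cons s rest ih =>
    intro h
    rw [List.pairwise_cons] at h
    by_cases hs : s ≤ τ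
    · rw [List.filter_cons, List.filter_cons, if_pos (by simp [hs]),
        if_neg (by simp [not_lt.2 hs]), List.cons_append]
      exact congrArg (s :: ·) (ih h.2)
    · push_neg at hs
      have h1 : rest.filter (fun x => decide (x ≤ τ)) = [] := by
        rw [List.filter_eq_nil_iff]
        intro x hx
        simp only [decide_eq_true_eq]
        exact not_le.2 (lt_of_lt_of_le hs (h.1 x hx))
      have h2 : rest.filter (fun x => decide (τ < x)) = rest := by
        rw [List.filter_eq_self]
        intro x hx
        simp only [decide_eq_true_eq]
        exact lt_of_lt_of_le hs (h.1 x hx)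
      simp [List.filter_cons, not_le.2 hs, hs, h1, h2]

lemma myLoadsAppend (hm : 0 < m) :
    ∀ (a b : List ℝ) (ℓ : Fin m → ℝ),
    loadsAfter hm ℓ (a ++ b) = loadsAfter hm (loadsAfter hm ℓ a) b := by
  intro a
  induction a with
  | nil => intro b ℓ; rfl
  | cons s rest ih => intro b ℓ; exact ih b (schedStep hm ℓ s)

end Aux

/-- if initial loads are at most S, jobs are listed in
nondecreasing order of size, and fewer than m jobs are τ-big, then the free
time is at most S + V/m + τ where V is the total size of the τ-small jobs. -/
theorem stmt9 (m : ℕ) (hm : 0 < m) (S τ : ℝ) (hτ : 0 ≤ τ)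
    (ℓ : Fin m → ℝ) (hℓ0 : ∀ i, 0 ≤ ℓ i) (hℓS : ∀ i, ℓ i ≤ S)
    (jobs : List ℝ) (hjobs : ∀ s ∈ jobs, 0 ≤ s) (hsorted : jobs.Pairwise (· ≤ ·))
    (hbig : (jobs.filter (fun s => τ < s)).length < m) :
    freeTime hm ℓ jobs ≤ S + (jobs.filter (fun s => s ≤ τ)).sum / m + τ := by
  set small := jobs.filter (fun s => s ≤ τ) with hsmalldef
  set big := jobs.filter (fun s => τ < s) with hbigdef
  have hsplit : jobs = small ++ big := mySortedSplit τ jobs hsorted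
  have hsm : ∀ s ∈ small, s ≤ τ ∧ 0 ≤ s := by
    intro s hs
    rw [hsmalldef, List.mem_filter] at hs
    exact ⟨by simpa using hs.2, hjobs s hs.1⟩
  have hV0 : 0 ≤ small.sum := List.sum_nonneg (fun s hs => (hsm s hs).2)
  set ℓ₁ := loadsAfter hm ℓ small with hℓ₁
  have hne : (Finset.univ : Finset (Fin m)).Nonempty := ⟨⟨0, hm⟩, Finset.mem_univ _⟩
  have hm' : (0:ℝ) < m := Nat.cast_pos.2 hm
  have hsum : ∑ i, ℓ₁ i = ∑ i, ℓ i + small.sum := mySum_loadsAfter hm small ℓ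
  have hinf : Finset.univ.inf' hne ℓ₁ ≤ S + small.sum / m := by
    by_contra hc
    push_neg at hc
    have hlt : ∀ i, S + small.sum / m < ℓ₁ i := fun i =>
      lt_of_lt_of_le hc (Finset.inf'_le ℓ₁ (Finset.mem_univ i))
    have hsum2 : (m:ℝ) * (S + small.sum / m) < ∑ i, ℓ₁ i := by
      calc (m:ℝ) * (S + small.sum / m) = ∑ _i : Fin m, (S + small.sum / m) := by
            rw [Finset.sum_const, Finset.card_univ, Fintype.card_fin, nsmul_eq_mul]
        _ < ∑ i, ℓ₁ i := Finset.sum_lt_sum_of_nonempty hne (fun i _ => hlt i)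
    have hsumℓ : ∑ i, ℓ i ≤ (m:ℝ) * S := by
      calc ∑ i, ℓ i ≤ ∑ _i : Fin m, S := Finset.sum_le_sum (fun i _ => hℓS i)
        _ = (m:ℝ) * S := by rw [Finset.sum_const, Finset.card_univ, Fintype.card_fin, nsmul_eq_mul]
    rw [hsum] at hsum2
    have hdiv : (m:ℝ) * (small.sum / m) = small.sum := by field_simp
    nlinarith
  have hbound : ∀ i, ℓ₁ i ≤ S + small.sum / m + τ := by
    intro i
    have h1 := myLoads_le hm τ hτ small S ℓ (fun s hs => (hsm s hs).2)
      (fun s hs => (hsm s hs).1) hℓS i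
    have hSle : S ≤ S + small.sum / m + τ := by
      have : 0 ≤ small.sum / m := div_nonneg hV0 (le_of_lt hm')
      linarith
    calc ℓ₁ i ≤ max S (Finset.univ.inf' ⟨⟨0, hm⟩, Finset.mem_univ _⟩ ℓ₁ + τ) := h1
      _ ≤ S + small.sum / m + τ := by
          apply max_le hSle
          have : Finset.univ.inf' (⟨⟨0, hm⟩, Finset.mem_univ _⟩ :
              (Finset.univ : Finset (Fin m)).Nonempty) ℓ₁ = Finset.univ.inf' hne ℓ₁ := rfl
          rw [this]; linarith
  obtain ⟨T, hT, hT2⟩ := myUntouched hm big ℓ₁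
  have hex : ∃ i, i ∉ T := by
    by_contra hc
    push_neg at hc
    have hTu : T = Finset.univ := Finset.eq_univ_of_forall hc
    rw [hTu, Finset.card_univ, Fintype.card_fin] at hT
    omega
  obtain ⟨i, hi⟩ := hex
  have hfree : freeTime hm ℓ jobs ≤ ℓ₁ i := by
    rw [hsplit]
    unfold freeTime
    rw [myLoadsAppend hm small big ℓ, ← hℓ₁]
    calc Finset.univ.inf' _ (loadsAfter hm ℓ₁ big) ≤ loadsAfter hm ℓ₁ big i :=
          Finset.inf'_le _ (Finset.mem_univ i)
      _ = ℓ₁ i := hT2 i hi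
  exact hfree.trans (hbound i)
end

section
/- Let K ≥ 1 be an integer and n = 2^K. Let 0 ≤ S_1 ≤ S_2 ≤ … ≤ S_n be real numbers, and let F : {1, …, n−1} → ℝ satisfy F(i) ≥ S_i for every i. Then ∑_{i=1}^{n−1} S_i ≤ ∑_{k=1}^{K} (n/2^k) · F(n − n/2^k). -/
lemma stmt11_helper (a : ℕ → ℕ) (ha : Monotone a) (S : ℕ → ℝ) (K : ℕ) :
    ∑ i ∈ Finset.Ioc (a 0) (a K), S i
      = ∑ k ∈ Finset.Ioc 0 K, ∑ i ∈ Finset.Ioc (a (k - 1)) (a k), S i := by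
  induction K with
  | zero => simp
  | succ m ih =>
    rw [Finset.sum_Ioc_succ_top (Nat.zero_le m), ← ih,
        ← Finset.sum_Ioc_consecutive _ (ha (Nat.zero_le m)) (ha (Nat.le_succ m))]
    simp

/-- for n = 2^K, nondecreasing nonnegative starting times
S₁ ≤ … ≤ Sₙ, and free times F with F(i) ≥ S_i for 1 ≤ i ≤ n − 1, the sum of
the first n − 1 starting times is at most the weighted free time
∑_{k=1}^{K} (n/2^k)·F(n − n/2^k). -/
theorem stmt11 (K : ℕ) (hK : 1 ≤ K) (n : ℕ) (hn : n = 2 ^ K)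
    (S : ℕ → ℝ) (hS0 : 0 ≤ S 1)
    (hmono : ∀ i j, 1 ≤ i → i ≤ j → j ≤ n → S i ≤ S j)
    (F : ℕ → ℝ) (hF : ∀ i, 1 ≤ i → i ≤ n - 1 → S i ≤ F i) :
    ∑ i ∈ Finset.Icc 1 (n - 1), S i ≤
      ∑ k ∈ Finset.Icc 1 K, ((n / 2 ^ k : ℕ) : ℝ) * F (n - n / 2 ^ k) := by
  have h2 : ∀ k, k ≤ K → (n / 2 ^ k : ℕ) = 2 ^ (K - k) := by
    intro k hk
    rw [hn, Nat.pow_div hk (by norm_num)]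
  set a : ℕ → ℕ := fun k => n - n / 2 ^ k with ha
  have hamono : Monotone a := by
    intro i j hij
    have : n / 2 ^ j ≤ n / 2 ^ i :=
      Nat.div_le_div_left (Nat.pow_le_pow_right (by norm_num) hij) (by positivity)
    simp only [ha]
    omega
  have ha0 : a 0 = 0 := by simp [ha]
  have haK : a K = n - 1 := by
    simp only [ha, h2 K le_rfl, Nat.sub_self, pow_zero]
  have hIcc : Finset.Icc 1 (n - 1) = Finset.Ioc (a 0) (a K) := by
    rw [ha0, haK, ← Finset.Icc_add_one_left_eq_Ioc, zero_add]
  rw [hIcc, stmt11_helper a hamono S K, show Finset.Icc 1 K = Finset.Ioc 0 K by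
    rw [← Finset.Icc_add_one_left_eq_Ioc, zero_add]]
  apply Finset.sum_le_sum
  intro k hk
  rw [Finset.mem_Ioc] at hk
  obtain ⟨hk1, hkK⟩ := hk
  have hnpos : 0 < n := by rw [hn]; positivity
  have hk' : k - 1 ≤ K := by omega
  have hdiv : (n / 2 ^ k : ℕ) = 2 ^ (K - k) := h2 k hkK
  have hdiv' : (n / 2 ^ (k - 1) : ℕ) = 2 ^ (K - (k - 1)) := h2 (k - 1) hk'
  have hpowlt : 2 ^ (K - k) < n := by
    rw [hn]; exact Nat.pow_lt_pow_right (by norm_num) (by omega)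
  have hpowlt' : 2 ^ (K - (k - 1)) ≤ n := by
    rw [hn]; exact Nat.pow_le_pow_right (by norm_num) (by omega)
  have hpowpos : 0 < 2 ^ (K - k) := by positivity
  have hcard : (Finset.Ioc (a (k - 1)) (a k)).card = 2 ^ (K - k) := by
    rw [Nat.card_Ioc]
    have h2p : 2 ^ (K - (k - 1)) = 2 * 2 ^ (K - k) := by
      rw [← pow_succ']
      congr 1
      omega
    simp only [ha, hdiv, hdiv']
    omega
  have hakle : a k ≤ n - 1 := by simp only [ha, hdiv]; omega
  have hakge : 1 ≤ a k := by simp only [ha, hdiv]; omega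
  have hbound : ∀ i ∈ Finset.Ioc (a (k - 1)) (a k), S i ≤ S (a k) := by
    intro i hi
    rw [Finset.mem_Ioc] at hi
    exact hmono i (a k) (by omega) hi.2 (by omega)
  calc ∑ i ∈ Finset.Ioc (a (k - 1)) (a k), S i
      ≤ (Finset.Ioc (a (k - 1)) (a k)).card • S (a k) :=
        Finset.sum_le_card_nsmul _ _ _ hbound
    _ = ((n / 2 ^ k : ℕ) : ℝ) * S (a k) := by
        rw [hcard, nsmul_eq_mul, hdiv]
    _ ≤ ((n / 2 ^ k : ℕ) : ℝ) * F (n - n / 2 ^ k) := by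
        apply mul_le_mul_of_nonneg_left _ (by positivity)
        exact hF (a k) hakge hakle
end

section
/- Let K ≥ 1 be an integer and n = 2^K. Let 0 ≤ S_1 ≤ S_2 ≤ … ≤ S_n be real numbers, and let F : {1, …, n−1} → ℝ satisfy 0 ≤ F(i) ≤ S_{i+1} for every i. Then ∑_{i=1}^{n} S_i ≥ (1/2) ∑_{k=1}^{K} (n/2^k) · F(n − n/2^k). -/
/-- for n = 2^K, nondecreasing nonnegative starting times
S₁ ≤ … ≤ Sₙ, and free times F with 0 ≤ F(i) ≤ S_{i+1} for 1 ≤ i ≤ n − 1, the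
sum of the starting times is at least half the weighted free time
∑_{k=1}^{K} (n/2^k)·F(n − n/2^k). -/
theorem stmt12 (K : ℕ) (hK : 1 ≤ K) (n : ℕ) (hn : n = 2 ^ K)
    (S : ℕ → ℝ) (hS0 : 0 ≤ S 1)
    (hmono : ∀ i j, 1 ≤ i → i ≤ j → j ≤ n → S i ≤ S j)
    (F : ℕ → ℝ) (hF0 : ∀ i, 1 ≤ i → i ≤ n - 1 → 0 ≤ F i)
    (hF : ∀ i, 1 ≤ i → i ≤ n - 1 → F i ≤ S (i + 1)) :
    (1 / 2) * ∑ k ∈ Finset.Icc 1 K, ((n / 2 ^ k : ℕ) : ℝ) * F (n - n / 2 ^ k) ≤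
      ∑ i ∈ Finset.Icc 1 n, S i := by
  have h2 : ∀ k ∈ Finset.Icc 1 K, n / 2 ^ k = 2 ^ (K - k) := by
    intro k hk
    simp only [Finset.mem_Icc] at hk
    rw [hn, Nat.pow_div hk.2 (by norm_num)]
  rw [Finset.sum_congr rfl (fun k hk => by rw [h2 k hk])]
  have hS1 : ∀ i, 1 ≤ i → i ≤ n → 0 ≤ S i :=
    fun i h1 h2' => le_trans hS0 (hmono 1 i le_rfl h1 h2')
  have hpow : ∀ k, 1 ≤ k → k ≤ K → 2 ^ (K - k) < n := by
    intro k hk1 hk2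
    rw [hn]; exact Nat.pow_lt_pow_right one_lt_two (by omega)
  set B : ℕ → Finset ℕ := fun k => Finset.Ioc (n - 2 ^ (K - k)) (n - 2 ^ (K - k) / 2)
    with hBdef
  have key : ∀ k ∈ Finset.Icc 1 K,
      ((2 ^ (K - k) : ℕ) : ℝ) * F (n - 2 ^ (K - k)) ≤ 2 * ∑ i ∈ B k, S i := by
    intro k hk
    simp only [Finset.mem_Icc] at hk
    have hlt := hpow k hk.1 hk.2
    have ha1 : 1 ≤ 2 ^ (K - k) := Nat.one_le_two_pow
    have hFle : F (n - 2 ^ (K - k)) ≤ S (n - 2 ^ (K - k) + 1) := hF _ (by omega) (by omega)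
    have hSlow : 0 ≤ S (n - 2 ^ (K - k) + 1) := hS1 _ (by omega) (by omega)
    have hcard : (B k).card = 2 ^ (K - k) - 2 ^ (K - k) / 2 := by
      simp only [hBdef, Nat.card_Ioc]
      omega
    have hsum : ((B k).card : ℝ) * S (n - 2 ^ (K - k) + 1) ≤ ∑ i ∈ B k, S i := by
      have h := Finset.card_nsmul_le_sum (B k) S (S (n - 2 ^ (K - k) + 1)) ?_
      · simpa [nsmul_eq_mul] using h
      · intro i hi
        simp only [hBdef, Finset.mem_Ioc] at hi
        exact hmono _ i (by omega) (by omega) (by omega)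
    have hcard2 : ((2 ^ (K - k) : ℕ) : ℝ) ≤ 2 * (B k).card := by
      have : 2 ^ (K - k) ≤ 2 * (2 ^ (K - k) - 2 ^ (K - k) / 2) := by omega
      rw [hcard]; exact_mod_cast this
    calc ((2 ^ (K - k) : ℕ) : ℝ) * F (n - 2 ^ (K - k))
        ≤ ((2 ^ (K - k) : ℕ) : ℝ) * S (n - 2 ^ (K - k) + 1) :=
          mul_le_mul_of_nonneg_left hFle (by positivity)
      _ ≤ (2 * (B k).card) * S (n - 2 ^ (K - k) + 1) :=
          mul_le_mul_of_nonneg_right hcard2 hSlow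
      _ ≤ 2 * ∑ i ∈ B k, S i := by nlinarith [hsum]
  have hdd : ∀ k k', k < k' → k' ≤ K → Disjoint (B k) (B k') := by
    intro k k' hlt hk'K
    have hle : 2 ^ (K - k') ≤ 2 ^ (K - k) / 2 := by
      have h1 : 2 ^ (K - k' ) * 2 ≤ 2 ^ (K - k) := by
        calc 2 ^ (K - k') * 2 = 2 ^ (K - k' + 1) := by ring
          _ ≤ 2 ^ (K - k) := Nat.pow_le_pow_right (by norm_num) (by omega)
      omega
    simp only [hBdef, Finset.disjoint_left, Finset.mem_Ioc]
    intro i hi hi'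
    omega
  have hdisj : ((Finset.Icc 1 K : Finset ℕ) : Set ℕ).PairwiseDisjoint B := by
    intro k hk k' hk' hne
    simp only [Finset.coe_Icc, Set.mem_Icc] at hk hk'
    rcases lt_or_gt_of_ne hne with h | h
    · exact hdd k k' h hk'.2
    · exact (hdd k' k h hk.2).symm
  have hsub : (Finset.Icc 1 K).biUnion B ⊆ Finset.Icc 1 n := by
    intro i hi
    simp only [Finset.mem_biUnion, hBdef, Finset.mem_Ioc] at hi
    obtain ⟨k, hk, h1, h2'⟩ := hi
    simp only [Finset.mem_Icc]
    omega
  have hmain : ∑ k ∈ Finset.Icc 1 K, ((2 ^ (K - k) : ℕ) : ℝ) * F (n - 2 ^ (K - k))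
      ≤ 2 * ∑ i ∈ Finset.Icc 1 n, S i := by
    calc ∑ k ∈ Finset.Icc 1 K, ((2 ^ (K - k) : ℕ) : ℝ) * F (n - 2 ^ (K - k))
        ≤ ∑ k ∈ Finset.Icc 1 K, 2 * ∑ i ∈ B k, S i := Finset.sum_le_sum key
      _ = 2 * ∑ k ∈ Finset.Icc 1 K, ∑ i ∈ B k, S i := by rw [Finset.mul_sum]
      _ = 2 * ∑ i ∈ (Finset.Icc 1 K).biUnion B, S i := by
          rw [Finset.sum_biUnion hdisj]
      _ ≤ 2 * ∑ i ∈ Finset.Icc 1 n, S i := by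
          have := Finset.sum_le_sum_of_subset_of_nonneg hsub
            (fun i hi _ => hS1 i (Finset.mem_Icc.mp hi).1 (Finset.mem_Icc.mp hi).2)
          linarith
  linarith
end
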